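/- Let a be a symmetric, irreflexive, triangle-free binary relation on a set B, let Δ be the diagonal of B, and let b := (B×B)∖(a ∪ Δ). Suppose there exist x, y, z ∈ B³ such that (x₁,y₁) ∈ a, (x₂,y₂) ∈ a, x₃ = y₃; y₁ = z₁, (y₂,z₂) ∈ a, (y₃,z₃) ∈ a; and (x₁,z₁) ∈ a, x₂ = z₂, (x₃,z₃) ∈ a. Suppose further there exist u, v, w ∈ B³ such that (u₁,v₁) ∈ a, (u₂,v₂) ∈ a, u₃ = v₃; v₁ = w₁, (v₂,w₂) ∈ a, (v₃,w₃) ∈ a; and (u₁,w₁) ∈ a, (u₂,w₂) ∈ b, (u₃,w₃) ∈ a. Then there is no ternary operation s : B³ → B with the following properties: (i) s is edge-conservative with respect to the partition {Δ, a, b} of B×B (for all p, q ∈ B³, (s(p),s(q)) ∈ r₁ ∪ r₂ ∪ r₃, where rᵢ ∈ {Δ, a, b} is the part containing (pᵢ,qᵢ)); (ii) s is {Δ,a}-canonical with behaviour s̄, i.e., there is a function s̄ : {0,1}³ → {0,1} such that for all p, q ∈ B³ with (pᵢ,qᵢ) ∈ a ∪ Δ for all i, one has (s(p),s(q)) ∈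 a if and only if s̄(t₁,t₂,t₃) = 1, where tᵢ = 1 if (pᵢ,qᵢ) ∈ a and tᵢ = 0 if pᵢ = qᵢ; (iii) s̄ is cyclic: s̄(t₁,t₂,t₃) = s̄(t₃,t₁,t₂) for all t ∈ {0,1}³. -/

import Mathlib

/-!
Cyclicity forces the behaviour of `s` to take one common value on the three rotations of
the type `(a, a, id)`. The triangle `x, y, z` realises all three rotations, so that value
is "not `a`": otherwise `s x, s y, s z` would be an `a`-triangle. Edge-conservativity
then collapses the pairs `(u, v)` and `(v, w)`, whose types lie in `{a, id}`, giving
`s u = s v = s w`; but `(u, w)` has type `(a, b, a)`, and no coordinate of it can be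
matched by the equal pair `(s u, s w)`.
-/

/-- The diagonal relation on `B`, viewed as a set of pairs. -/
def diag (B : Type*) : Set (B × B) := {p | p.1 = p.2}

/-- Given two disjoint relations `a` and `b` (here: an atom `a` and
`b = (B × B) ∖ (a ∪ Δ)`), `SamePart3 a b p q r s` says that `(r, s)` lies in
the same part of the partition `{Δ, a, b}` of `B × B` as `(p, q)`. -/
def SamePart3 {B : Type*} (a b : Set (B × B)) (p q r s : B) : Prop :=
  (p = q ∧ r = s) ∨ ((p, q) ∈ a ∧ (r, s) ∈ a) ∨ ((p, q) ∈ b ∧ (r, s) ∈ b)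

section

variable {B : Type*} {a b : Set (B × B)}

def IsEdgeConservative (a b : Set (B × B)) (s : B → B → B → B) : Prop :=
  ∀ p₁ p₂ p₃ q₁ q₂ q₃ : B,
    SamePart3 a b p₁ q₁ (s p₁ p₂ p₃) (s q₁ q₂ q₃) ∨
    SamePart3 a b p₂ q₂ (s p₁ p₂ p₃) (s q₁ q₂ q₃) ∨
    SamePart3 a b p₃ q₃ (s p₁ p₂ p₃) (s q₁ q₂ q₃)

def HasType (a : Set (B × B)) (t : Bool) (p q : B) : Prop :=
  if t = true then (p, q) ∈ a else p = q

def IsCanonicalWithBehaviour (a : Set (B × B)) (s : B → B → B → B)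
    (sbar : Bool → Bool → Bool → Bool) : Prop :=
  ∀ (p₁ p₂ p₃ q₁ q₂ q₃ : B) (t₁ t₂ t₃ : Bool),
    HasType a t₁ p₁ q₁ → HasType a t₂ p₂ q₂ → HasType a t₃ p₃ q₃ →
    ((s p₁ p₂ p₃, s q₁ q₂ q₃) ∈ a ↔ sbar t₁ t₂ t₃ = true)

namespace SamePart3

variable {p q r s : B}

theorem eq_of_notMem (hb : Disjoint b (a ∪ diag B)) (hpq : (p, q) ∈ a ∪ diag B)
    (hrs : (r, s) ∉ a) (h : SamePart3 a b p q r s) : r = s := by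
  rcases h with ⟨-, h⟩ | ⟨-, h⟩ | ⟨h, -⟩
  · exact h
  · exact absurd h hrs
  · exact absurd hpq (Set.disjoint_left.mp hb h)

theorem eq_of_right_eq (ha : ∀ x, (x, x) ∉ a) (hb : Disjoint b (diag B))
    (h : SamePart3 a b p q r r) : p = q := by
  rcases h with ⟨h, -⟩ | ⟨-, h⟩ | ⟨-, h⟩
  · exact h
  · exact absurd h (ha r)
  · exact absurd rfl (Set.disjoint_left.mp hb h)

end SamePart3

namespace IsEdgeConservative

variable {s : B → B → B → B} {p₁ p₂ p₃ q₁ q₂ q₃ : B}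

theorem eq_of_notMem (hs : IsEdgeConservative a b s) (hb : Disjoint b (a ∪ diag B))
    (h₁ : (p₁, q₁) ∈ a ∪ diag B) (h₂ : (p₂, q₂) ∈ a ∪ diag B) (h₃ : (p₃, q₃) ∈ a ∪ diag B)
    (hna : (s p₁ p₂ p₃, s q₁ q₂ q₃) ∉ a) : s p₁ p₂ p₃ = s q₁ q₂ q₃ := by
  rcases hs p₁ p₂ p₃ q₁ q₂ q₃ with h | h | h
  · exact h.eq_of_notMem hb h₁ hna
  · exact h.eq_of_notMem hb h₂ hna
  · exact h.eq_of_notMem hb h₃ hna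

theorem eq_or_eq_or_eq (hs : IsEdgeConservative a b s) (ha : ∀ x, (x, x) ∉ a)
    (hb : Disjoint b (diag B)) (h : s p₁ p₂ p₃ = s q₁ q₂ q₃) :
    p₁ = q₁ ∨ p₂ = q₂ ∨ p₃ = q₃ := by
  have hs := hs p₁ p₂ p₃ q₁ q₂ q₃
  rw [h] at hs
  exact hs.imp (·.eq_of_right_eq ha hb) (Or.imp (·.eq_of_right_eq ha hb) (·.eq_of_right_eq ha hb))

end IsEdgeConservative

theorem IsCanonicalWithBehaviour.eq_false_of_triangleFree {s : B → B → B → B}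
    {sbar : Bool → Bool → Bool → Bool} (hs : IsCanonicalWithBehaviour a s sbar)
    (hcyc : ∀ t₁ t₂ t₃ : Bool, sbar t₁ t₂ t₃ = sbar t₃ t₁ t₂)
    (ha_tf : ∀ p q r : B, (p, q) ∈ a → (q, r) ∈ a → (p, r) ∉ a)
    {x₁ x₂ x₃ y₁ y₂ y₃ z₁ z₂ z₃ : B}
    (hxy : (x₁, y₁) ∈ a ∧ (x₂, y₂) ∈ a ∧ x₃ = y₃)
    (hyz : y₁ = z₁ ∧ (y₂, z₂) ∈ a ∧ (y₃, z₃) ∈ a)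
    (hxz : (x₁, z₁) ∈ a ∧ x₂ = z₂ ∧ (x₃, z₃) ∈ a) :
    sbar true true false = false := by
  rw [← Bool.not_eq_true]
  intro h
  exact ha_tf _ _ _
    ((hs _ _ _ _ _ _ true true false hxy.1 hxy.2.1 hxy.2.2).2 h)
    ((hs _ _ _ _ _ _ false true true hyz.1 hyz.2.1 hyz.2.2).2
      (((hcyc _ _ _).trans (hcyc _ _ _)).trans h))
    ((hs _ _ _ _ _ _ true false true hxz.1 hxz.2.1 hxz.2.2).2 ((hcyc _ _ _).trans h))

end

theorem stmt11_general {B : Type*} (a : Set (B × B))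
    (ha_irr : ∀ x : B, (x, x) ∉ a)
    (ha_tf : ∀ p q r : B, (p, q) ∈ a → (q, r) ∈ a → (p, r) ∉ a)
    (b : Set (B × B)) (hb : b = (a ∪ diag B)ᶜ)
    (x₁ x₂ x₃ y₁ y₂ y₃ z₁ z₂ z₃ : B)
    (hxy : (x₁, y₁) ∈ a ∧ (x₂, y₂) ∈ a ∧ x₃ = y₃)
    (hyz : y₁ = z₁ ∧ (y₂, z₂) ∈ a ∧ (y₃, z₃) ∈ a)
    (hxz : (x₁, z₁) ∈ a ∧ x₂ = z₂ ∧ (x₃, z₃) ∈ a)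
    (u₁ u₂ u₃ v₁ v₂ v₃ w₁ w₂ w₃ : B)
    (huv : (u₁, v₁) ∈ a ∧ (u₂, v₂) ∈ a ∧ u₃ = v₃)
    (hvw : v₁ = w₁ ∧ (v₂, w₂) ∈ a ∧ (v₃, w₃) ∈ a)
    (huw : (u₁, w₁) ∈ a ∧ (u₂, w₂) ∈ b ∧ (u₃, w₃) ∈ a) :
    ¬ ∃ s : B → B → B → B,
      (∀ p₁ p₂ p₃ q₁ q₂ q₃ : B,
        SamePart3 a b p₁ q₁ (s p₁ p₂ p₃) (s q₁ q₂ q₃) ∨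
        SamePart3 a b p₂ q₂ (s p₁ p₂ p₃) (s q₁ q₂ q₃) ∨
        SamePart3 a b p₃ q₃ (s p₁ p₂ p₃) (s q₁ q₂ q₃)) ∧
      ∃ sbar : Bool → Bool → Bool → Bool,
        (∀ (p₁ p₂ p₃ q₁ q₂ q₃ : B) (t₁ t₂ t₃ : Bool),
          (if t₁ = true then (p₁, q₁) ∈ a else p₁ = q₁) →
          (if t₂ = true then (p₂, q₂) ∈ a else p₂ = q₂) →
          (if t₃ = true then (p₃, q₃) ∈ a else p₃ = q₃) →
          ((s p₁ p₂ p₃, s q₁ q₂ q₃) ∈ a ↔ sbar t₁ t₂ t₃ = true)) ∧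
        (∀ t₁ t₂ t₃ : Bool, sbar t₁ t₂ t₃ = sbar t₃ t₁ t₂) := by
  rintro ⟨s, hcons : IsEdgeConservative a b s, sbar,
    hcan : IsCanonicalWithBehaviour a s sbar, hcyc⟩
  have hb_disj : Disjoint b (a ∪ diag B) := hb ▸ disjoint_compl_left
  have hb_diag : Disjoint b (diag B) := hb_disj.mono_right Set.subset_union_right
  have hval : sbar true true false = false :=
    hcan.eq_false_of_triangleFree hcyc ha_tf hxy hyz hxz
  have hval' : sbar false true true = false := (hcyc _ _ _).trans ((hcyc _ _ _).trans hval)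
  have huv_eq : s u₁ u₂ u₃ = s v₁ v₂ v₃ :=
    hcons.eq_of_notMem hb_disj (.inl huv.1) (.inl huv.2.1) (.inr huv.2.2) fun h ↦ by
      simpa [hval] using (hcan _ _ _ _ _ _ true true false huv.1 huv.2.1 huv.2.2).1 h
  have hvw_eq : s v₁ v₂ v₃ = s w₁ w₂ w₃ :=
    hcons.eq_of_notMem hb_disj (.inr hvw.1) (.inl hvw.2.1) (.inl hvw.2.2) fun h ↦ by
      simpa [hval'] using (hcan _ _ _ _ _ _ false true true hvw.1 hvw.2.1 hvw.2.2).1 h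
  rcases hcons.eq_or_eq_or_eq ha_irr hb_diag (huv_eq.trans hvw_eq) with h | h | h
  · exact ha_irr u₁ (h ▸ huw.1)
  · exact Set.disjoint_left.mp hb_diag huw.2.1 h
  · exact ha_irr u₃ (h ▸ huw.2.2)

/-- the combinatorial core of Theorem 6.8. Let `a` be symmetric,
irreflexive and triangle-free, `b := (a ∪ Δ)ᶜ`, and suppose the two triangle
configurations `x, y, z` (of types `(a,a,id)`, `(id,a,a)`, `(a,id,a)`) and
`u, v, w` (of types `(a,a,id)`, `(id,a,a)`, `(a,b,a)`) exist. Then there is no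
ternary operation `s` that is edge-conservative w.r.t. `{Δ, a, b}` and
`{Δ,a}`-canonical with a cyclic behaviour. -/
theorem stmt11 {B : Type*} (a : Set (B × B))
    (ha_symm : ∀ x y : B, (x, y) ∈ a → (y, x) ∈ a)
    (ha_irr : ∀ x : B, (x, x) ∉ a)
    (ha_tf : ∀ p q r : B, (p, q) ∈ a → (q, r) ∈ a → (p, r) ∉ a)
    (b : Set (B × B)) (hb : b = (a ∪ diag B)ᶜ)
    (x₁ x₂ x₃ y₁ y₂ y₃ z₁ z₂ z₃ : B)
    (hxy : (x₁, y₁) ∈ a ∧ (x₂, y₂) ∈ a ∧ x₃ = y₃)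
    (hyz : y₁ = z₁ ∧ (y₂, z₂) ∈ a ∧ (y₃, z₃) ∈ a)
    (hxz : (x₁, z₁) ∈ a ∧ x₂ = z₂ ∧ (x₃, z₃) ∈ a)
    (u₁ u₂ u₃ v₁ v₂ v₃ w₁ w₂ w₃ : B)
    (huv : (u₁, v₁) ∈ a ∧ (u₂, v₂) ∈ a ∧ u₃ = v₃)
    (hvw : v₁ = w₁ ∧ (v₂, w₂) ∈ a ∧ (v₃, w₃) ∈ a)
    (huw : (u₁, w₁) ∈ a ∧ (u₂, w₂) ∈ b ∧ (u₃, w₃) ∈ a) :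
    ¬ ∃ s : B → B → B → B,
      (∀ p₁ p₂ p₃ q₁ q₂ q₃ : B,
        SamePart3 a b p₁ q₁ (s p₁ p₂ p₃) (s q₁ q₂ q₃) ∨
        SamePart3 a b p₂ q₂ (s p₁ p₂ p₃) (s q₁ q₂ q₃) ∨
        SamePart3 a b p₃ q₃ (s p₁ p₂ p₃) (s q₁ q₂ q₃)) ∧
      ∃ sbar : Bool → Bool → Bool → Bool,
        (∀ (p₁ p₂ p₃ q₁ q₂ q₃ : B) (t₁ t₂ t₃ : Bool),
          (if t₁ = true then (p₁, q₁) ∈ a else p₁ = q₁) →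
          (if t₂ = true then (p₂, q₂) ∈ a else p₂ = q₂) →
          (if t₃ = true then (p₃, q₃) ∈ a else p₃ = q₃) →
          ((s p₁ p₂ p₃, s q₁ q₂ q₃) ∈ a ↔ sbar t₁ t₂ t₃ = true)) ∧
        (∀ t₁ t₂ t₃ : Bool, sbar t₁ t₂ t₃ = sbar t₃ t₁ t₂) :=
  stmt11_general a ha_irr ha_tf b hb x₁ x₂ x₃ y₁ y₂ y₃ z₁ z₂ z₃ hxy hyz hxz u₁ u₂ u₃ v₁ v₂ v₃ w₁ w₂
    w₃ huv hvw huw
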